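/- arXiv:math/0205277 — 4 statements merged into one kernel-verified Lean document; each statement's English description precedes it below -/
import Mathlib

section
/- Let X be an F-space and let A be a subset of the space of continuous linear operators on X which is a countable union of compact sets (in the operator-norm / strong topology on L(X)). Then the set of common hypercyclic vectors ⋂_{T∈A} HC(T) is a Gδ subset of X. -/
open Filter Topology Set

/-- The set of hypercyclic vectors of a continuous linear operator `T`:
those `x` whose orbit `{Tⁿ x : n ≥ 1}` is dense. -/
def hypercyclicVectors {X : Type*} [AddCommGroup X] [Module ℝ X] [TopologicalSpace X]
    (T : X →L[ℝ] X) : Set X :=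
  {x : X | Dense (Set.range fun n : ℕ => (T ^ (n + 1)) x)}

open Function Pointwise Uniformity Bornology TopologicalSpace

/-!
A compact set `K` of operators on a Baire space is pointwise bounded, hence equicontinuous by the
Banach–Steinhaus argument, so `(T, x) ↦ Tⁿ x` is jointly continuous on `K × X`. For `U` open, the
tube lemma then makes `{x | ∀ T ∈ K, ∃ n, Tⁿ⁺¹ x ∈ U}` open, and intersecting over a countable
basis and over the countably many compact pieces exhibits the common hypercyclic vectors as a
Gδ set. If `X` is not separable, no operator has a hypercyclic vector at all.
-/

theorem Absorbent.nonempty_interior_of_isClosed {𝕜 E : Type*} [NontriviallyNormedField 𝕜]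
    [AddCommGroup E] [Module 𝕜 E] [TopologicalSpace E] [ContinuousConstSMul 𝕜 E] [BaireSpace E]
    {S : Set E} (hS : Absorbent 𝕜 S) (hSc : IsClosed S) : (interior S).Nonempty := by
  obtain ⟨c, hc⟩ := NormedField.exists_one_lt_norm 𝕜
  have hc₀ : ∀ n : ℕ, c ^ n ≠ 0 := fun n => pow_ne_zero n (norm_pos_iff.1 (one_pos.trans hc))
  have hcover : ⋃ n : ℕ, c ^ n • S = univ := by
    refine eq_univ_of_forall fun x => ?_
    obtain ⟨r, hr⟩ := absorbs_iff_norm.1 (hS x)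
    obtain ⟨n, hn⟩ := pow_unbounded_of_one_lt r hc
    exact mem_iUnion.2 ⟨n, hr (c ^ n) (by rw [norm_pow]; exact hn.le) rfl⟩
  obtain ⟨n, hn⟩ :=
    nonempty_interior_of_iUnion_of_closed (fun n => hSc.smul_of_ne_zero (hc₀ n)) hcover
  rw [interior_smul₀ (hc₀ n)] at hn
  exact smul_set_nonempty.1 hn

theorem ContinuousLinearMap.equicontinuous_of_isVonNBounded_range_apply {𝕜 E F ι : Type*}
    [NontriviallyNormedField 𝕜] [AddCommGroup E] [Module 𝕜 E] [TopologicalSpace E]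
    [IsTopologicalAddGroup E] [ContinuousConstSMul 𝕜 E] [BaireSpace E]
    [AddCommGroup F] [Module 𝕜 F] [UniformSpace F] [IsUniformAddGroup F]
    (f : ι → E →L[𝕜] F) (hf : ∀ x, IsVonNBounded 𝕜 (range fun i => f i x)) :
    Equicontinuous ((↑) ∘ f) := by
  refine equicontinuous_of_equicontinuousAt_zero f fun U hU => ?_
  obtain ⟨C, hC, hCc, hCneg, hCU⟩ :=
    exists_closed_nhds_zero_neg_eq_add_subset (UniformSpace.ball_mem_nhds (0 : F) hU)
  -- `S` is closed and absorbent, so it has an interior point `x₀` by Baire; then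
  -- `f i y = f i (x₀ + y) - f i x₀ ∈ C - C` for `y` near `0`.
  set S := ⋂ i, f i ⁻¹' C
  have hS : Absorbent 𝕜 S := absorbent_iff_inv_smul.2 fun x => by
    filter_upwards [absorbs_iff_eventually_cobounded_mapsTo.1 (hf x hC)] with c hc
    exact mem_iInter.2 fun i => by simpa using hc (mem_range_self i)
  obtain ⟨x₀, hx₀⟩ := hS.nonempty_interior_of_isClosed
    (isClosed_iInter fun i => hCc.preimage (f i).continuous)
  have hx₀S : x₀ ∈ S := interior_subset hx₀
  have hnear : ∀ᶠ y in 𝓝 0, x₀ + y ∈ S := by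
    have := mem_interior_iff_mem_nhds.1 hx₀
    rwa [← map_add_left_nhds_zero] at this
  filter_upwards [hnear] with y hy i
  have hsplit : f i y = f i (x₀ + y) + -f i x₀ := by rw [map_add]; abel
  have hneg : -f i x₀ ∈ C := hCneg ▸ neg_mem_neg.2 (mem_iInter.1 hx₀S i)
  show (f i 0, f i y) ∈ U
  rw [map_zero, hsplit]
  exact hCU (add_mem_add (mem_iInter.1 hy i) hneg)

theorem Equicontinuous.continuous_uncurry {ι X α : Type*} [TopologicalSpace ι]
    [TopologicalSpace X] [UniformSpace α] {F : ι → X → α} (hF : Equicontinuous F)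
    (hcont : ∀ x, Continuous fun i => F i x) : Continuous (uncurry F) := by
  refine continuous_iff_continuousAt.2 fun ⟨i₀, x₀⟩ => Uniform.tendsto_nhds_right.2 fun U hU => ?_
  obtain ⟨V, hV, hVU⟩ := comp_mem_uniformity_sets hU
  have h₁ : ∀ᶠ i in 𝓝 i₀, (F i₀ x₀, F i x₀) ∈ V :=
    Uniform.tendsto_nhds_right.1 ((hcont x₀).tendsto i₀) hV
  have h₂ : ∀ᶠ x in 𝓝 x₀, ∀ i, (F i x₀, F i x) ∈ V := hF x₀ V hV
  rw [nhds_prod_eq]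
  exact (h₁.prod_mk h₂).mono fun p hp => hVU ⟨_, hp.1, hp.2 p.1⟩

theorem Continuous.iterate_uncurry {ι X : Type*} [TopologicalSpace ι] [TopologicalSpace X]
    {F : ι → X → X} (hF : Continuous (uncurry F)) (n : ℕ) :
    Continuous fun p : ι × X => (F p.1)^[n] p.2 := by
  induction n with
  | zero => exact continuous_snd
  | succ n ih =>
    simp only [iterate_succ_apply']
    exact hF.comp (continuous_fst.prodMk ih)

theorem isOpen_setOf_forall_mem_of_compactSpace {ι X : Type*} [TopologicalSpace ι]
    [TopologicalSpace X] [CompactSpace ι] {W : Set (ι × X)} (hW : IsOpen W) :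
    IsOpen {x | ∀ i, (i, x) ∈ W} := by
  have : {x | ∀ i, (i, x) ∈ W} = (Prod.snd '' Wᶜ)ᶜ := by ext; simp
  rw [this]
  exact (isClosedMap_snd_of_compactSpace _ hW.isClosed_compl).isOpen_compl

section Hypercyclic

variable {X : Type*} [AddCommGroup X] [Module ℝ X]

theorem separableSpace_of_mem_hypercyclicVectors [TopologicalSpace X] {T : X →L[ℝ] X} {x : X}
    (hx : x ∈ hypercyclicVectors T) : SeparableSpace X :=
  ⟨⟨_, countable_range _, hx⟩⟩

theorem TopologicalSpace.IsTopologicalBasis.mem_hypercyclicVectors_iff [TopologicalSpace X]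
    {B : Set (Set X)} (hB : IsTopologicalBasis B) {T : X →L[ℝ] X} {x : X} :
    x ∈ hypercyclicVectors T ↔ ∀ U ∈ B, U.Nonempty → ∃ n, (T ^ (n + 1)) x ∈ U := by
  simp only [hypercyclicVectors, mem_ofPred_eq, hB.dense_iff, inter_nonempty, mem_range]
  exact forall₂_congr fun U _ => imp_congr_right fun _ =>
    ⟨fun ⟨_, hy, n, hn⟩ => ⟨n, hn ▸ hy⟩, fun ⟨n, hn⟩ => ⟨_, hn, n, rfl⟩⟩

variable [UniformSpace X] [IsUniformAddGroup X] [ContinuousSMul ℝ X] [BaireSpace X]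

theorem IsCompact.isOpen_setOf_forall_exists_pow_apply_mem {K : Set (X →L[ℝ] X)}
    (hK : IsCompact K) {U : Set X} (hU : IsOpen U) :
    IsOpen {x | ∀ T ∈ K, ∃ n, (T ^ (n + 1)) x ∈ U} := by
  have : CompactSpace K := isCompact_iff_compactSpace.1 hK
  have hequi : Equicontinuous ((↑) ∘ ((↑) : K → X →L[ℝ] X)) :=
    ContinuousLinearMap.equicontinuous_of_isVonNBounded_range_apply _ fun x => by
      refine ((hK.image (continuous_eval_const x)).isVonNBounded ℝ).subset ?_
      rintro _ ⟨T, rfl⟩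
      exact mem_image_of_mem _ T.2
  have hjoint := hequi.continuous_uncurry fun x =>
    (continuous_eval_const x).comp continuous_subtype_val
  have hW : IsOpen (⋃ n, (fun p : K × X => (p.1 : X →L[ℝ] X)^[n + 1] p.2) ⁻¹' U) :=
    isOpen_iUnion fun n => hU.preimage (hjoint.iterate_uncurry (n + 1))
  convert isOpen_setOf_forall_mem_of_compactSpace hW using 1
  ext x
  simp

theorem isGδ_biInter_iUnion_hypercyclicVectors [SecondCountableTopology X] {ι : Type*}
    [Countable ι] {K : ι → Set (X →L[ℝ] X)} (hK : ∀ p, IsCompact (K p)) :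
    IsGδ (⋂ T ∈ ⋃ p, K p, hypercyclicVectors T) := by
  obtain ⟨B, hBc, hB₀, hB⟩ := exists_countable_basis X
  have hBne : ∀ U ∈ B, U.Nonempty := fun U hU => nonempty_iff_ne_empty.2 fun h => hB₀ (h ▸ hU)
  have : ⋂ T ∈ ⋃ p, K p, hypercyclicVectors T =
      ⋂ p, ⋂ U ∈ B, {x | ∀ T ∈ K p, ∃ n, (T ^ (n + 1)) x ∈ U} := by
    ext x
    simp only [mem_iInter, mem_iUnion, hB.mem_hypercyclicVectors_iff]
    exact ⟨fun h p U hU T hT => h T ⟨p, hT⟩ U hU (hBne U hU),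
      fun h T ⟨p, hT⟩ U hU _ => h p U hU T hT⟩
  rw [this]
  exact .iInter fun p => .biInter hBc fun U hU =>
    ((hK p).isOpen_setOf_forall_exists_pow_apply_mem (hB.isOpen hU)).isGδ

end Hypercyclic

/-- If `X` is an F-space (complete metrizable topological vector space)
and `A` is a subset of `L(X)` which is a countable union of compact sets (for the strong
topology on `L(X)`), then the set of common hypercyclic vectors `⋂_{T ∈ A} HC(T)` is a
Gδ subset of `X`. -/
theorem gdelta_common_hypercyclic
    {X : Type*} [AddCommGroup X] [Module ℝ X] [UniformSpace X]
    [IsUniformAddGroup X] [ContinuousSMul ℝ X] [CompleteSpace X]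
    [TopologicalSpace.MetrizableSpace X]
    (A : Set (X →L[ℝ] X))
    (hA : ∃ K : ℕ → Set (X →L[ℝ] X), (∀ p, IsCompact (K p)) ∧ A = ⋃ p, K p) :
    IsGδ (⋂ T ∈ A, hypercyclicVectors T) := by
  obtain ⟨K, hK, rfl⟩ := hA
  have : (𝓤 X).IsCountablyGenerated := IsUniformAddGroup.uniformity_countably_generated
  by_cases hsep : SeparableSpace X
  · exact isGδ_biInter_iUnion_hypercyclicVectors hK
  rcases (⋃ p, K p).eq_empty_or_nonempty with hA | ⟨T, hT⟩
  · simp [hA]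
  · convert IsGδ.empty
    exact eq_empty_of_forall_notMem fun x hx =>
      hsep (separableSpace_of_mem_hypercyclicVectors (mem_iInter₂.1 hx T hT))
end

section
/- There exist an integer k₀ ≥ 1 and a function j : {n ∈ ℕ : n ≥ k₀} → ℕ such that for any sequence (α_l)_{l≥1} of positive real numbers there exist a sequence (M_k)_{k≥k₀} of positive integers and a sequence (r_k)_{k≥k₀} of positive real numbers satisfying: (i) (M_k) is increasing and M_{k+1} − M_k → +∞; (ii) (r_k) is decreasing and r_{k+1}/r_k → 0; (iii) for every l ∈ ℕ, every ε > 0, every λ > 1 and every K > 0, there exists k > K such that j(k) = l and |λ^{M_k} r_k − α_l| < ε. -/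
/-!
Put `r_k = α_ℓ exp (-M_k c_k)`, so that `λ ^ M_k r_k = α_ℓ exp (-M_k (c_k - log λ))`: index `k`
serves the target `α_ℓ` at `log λ ≈ c_k`, with error `M_k (c_k - log λ)`. The indices are cut into
consecutive stages; stage `s` serves one target `ℓ`, its exponents run through an arithmetic
progression `M_m = A + m (s + 1)²` and its points through `c_{m+1} = c_m + 1 / ((s + 1) M_{m+1})`.
The points grow like a harmonic series, so they sweep `[1 / (s + 1), s + 1]`, and past the first
`c_m ≥ log λ` the error stays below `(w + 1)² / (s + 1)` for `w` further indices. The stage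
lengths depend on `α`, but `j k = v₂(k) + 1` does not: it takes every value `l` in each window of
`2 ^ l` consecutive indices, so some index of that stretch has `j k = l`. Each stage starts with an
exponent so large that `M_k` and `M_k c_k - log α_ℓ` grow by at least `s + 1` at every step, which
gives both growth conditions.
-/

open Filter Finset Real

noncomputable section

namespace AbakumovGordon

lemma exists_padicValNat_two_eq (p x : ℕ) :
    ∃ t, x ≤ t ∧ t < x + 2 ^ (p + 1) ∧ padicValNat 2 t = p := by
  have hval : ∀ u, padicValNat 2 (2 ^ p * (2 * u + 1)) = p := fun u => by
    rw [padicValNat.mul (by positivity) (by omega), padicValNat.prime_pow,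
      padicValNat.eq_zero_of_not_dvd (by omega), add_zero]
  set d := 2 ^ p
  have hd : 0 < d := by positivity
  obtain ⟨q, hq⟩ : ∃ q, 2 * d * q ≤ x ∧ x < 2 * d * q + 2 * d := by
    have := Nat.div_add_mod x (2 * d)
    have := Nat.mod_lt x (show 0 < 2 * d by omega)
    exact ⟨x / (2 * d), by constructor <;> linarith [Nat.zero_le (x % (2 * d))]⟩
  have hpow : 2 ^ (p + 1) = 2 * d := by rw [pow_succ]; ring
  rcases le_or_gt x (d * (2 * q + 1)) with h | h
  · exact ⟨_, h, by nlinarith, hval q⟩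
  · exact ⟨d * (2 * (q + 1) + 1), by nlinarith, by nlinarith, hval (q + 1)⟩

section Grid

variable (A G n : ℕ)

def gridM (m : ℕ) : ℕ := A + m * G

def gridPt (m : ℕ) : ℝ := (1 + ∑ i ∈ range m, (1 : ℝ) / gridM A G (i + 1)) / n

variable {A G n}

@[simp]
lemma gridM_zero : gridM A G 0 = A := by simp [gridM]

lemma gridM_succ (m : ℕ) : gridM A G (m + 1) = gridM A G m + G := by
  simp only [gridM]; ring

lemma gridM_add_le (hGA : G ≤ A) (m w : ℕ) : gridM A G (m + w) ≤ (w + 1) * gridM A G m := by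
  simp only [gridM]; nlinarith [Nat.mul_le_mul_left w hGA, Nat.zero_le (w * m * G)]

lemma gridPt_zero : gridPt A G n 0 = (n : ℝ)⁻¹ := by simp [gridPt]

lemma gridPt_succ (m : ℕ) :
    gridPt A G n (m + 1) = gridPt A G n m + 1 / (n * gridM A G (m + 1)) := by
  simp only [gridPt, sum_range_succ]; ring

lemma gridPt_mono : Monotone (gridPt A G n) :=
  monotone_nat_of_le_succ fun m => by
    rw [gridPt_succ]; simp only [le_add_iff_nonneg_right]; positivity

lemma inv_le_gridPt (m : ℕ) : (n : ℝ)⁻¹ ≤ gridPt A G n m :=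
  gridPt_zero (A := A) (G := G) ▸ gridPt_mono (Nat.zero_le m)

lemma tendsto_gridPt (hG : 0 < G) (hn : 0 < n) : Tendsto (gridPt A G n) atTop atTop := by
  refine tendsto_atTop_mono (fun m => ?_)
    ((tendsto_sum_range_one_div_nat_succ_atTop.atTop_div_const
      (show (0 : ℝ) < (A + G) * n by positivity)))
  -- `A + (i + 1) G ≤ (A + G) (i + 1)`
  have hterm : ∀ i ∈ range m,
      1 / ((i : ℝ) + 1) / ((A + G) * n) ≤ 1 / gridM A G (i + 1) / n := by
    intro i _
    rw [div_div, div_div, ← mul_assoc]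
    gcongr
    · simp only [gridM]; positivity
    · simp only [gridM]; push_cast; nlinarith
  rw [sum_div]
  refine (sum_le_sum hterm).trans ?_
  rw [gridPt, ← sum_div, add_div]
  simp only [le_add_iff_nonneg_left]; positivity

lemma gridM_mul_gridPt_succ (hG : 0 < G) (m : ℕ) :
    gridM A G (m + 1) * gridPt A G n (m + 1) =
      gridM A G m * gridPt A G n m + G * gridPt A G n m + 1 / n := by
  have hM : (gridM A G (m + 1) : ℝ) ≠ 0 := by simp only [gridM]; positivity
  rw [gridPt_succ, gridM_succ]
  push_cast
  field_simp

lemma gridPt_add_sub_le (hn : 0 < n) (hA : 0 < A) (m w : ℕ) :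
    gridPt A G n (m + w) - gridPt A G n m ≤ w / (n * gridM A G m) := by
  induction w with
  | zero => simp
  | succ w ih =>
    have hle : 1 / ((n : ℝ) * gridM A G (m + w + 1)) ≤ 1 / (n * gridM A G m) := by
      gcongr
      · simp only [gridM]; positivity
      · simp only [gridM]; gcongr; omega
    rw [← add_assoc, gridPt_succ]
    push_cast
    rw [add_div]
    linarith

lemma exists_gridPt_window (hn : 0 < n) (hA : 0 < A) (hGA : G ≤ A) {x : ℝ}
    (hx : (n : ℝ)⁻¹ ≤ x) {N : ℕ} (hN : x ≤ gridPt A G n N) :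
    ∃ m ≤ N, ∀ w : ℕ, 0 ≤ gridM A G (m + w) * (gridPt A G n (m + w) - x) ∧
      gridM A G (m + w) * (gridPt A G n (m + w) - x) ≤ (w + 1) ^ 2 / n := by
  have hex : ∃ m, x ≤ gridPt A G n m := ⟨N, hN⟩
  set m := Nat.find hex
  have hMm : (0 : ℝ) < gridM A G m := by simp only [gridM]; positivity
  -- `m` is the first grid point past `x`, so it overshoots `x` by at most one grid step
  have hover : gridPt A G n m - x ≤ 1 / (n * gridM A G m) := by
    rcases hm : m with _ | m'
    · rw [gridPt_zero]; have : (0 : ℝ) ≤ 1 / (n * gridM A G 0) := by positivity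
      linarith
    · have hlt : gridPt A G n m' < x := lt_of_not_ge (Nat.find_min hex (by omega))
      rw [gridPt_succ]; linarith
  refine ⟨m, Nat.find_min' hex hN, fun w => ⟨?_, ?_⟩⟩
  · exact mul_nonneg (Nat.cast_nonneg _)
      (sub_nonneg.2 ((Nat.find_spec hex).trans (gridPt_mono (Nat.le_add_right m w))))
  · have hpt : gridPt A G n (m + w) - x ≤ (w + 1) / (n * gridM A G m) := by
      rw [add_div]; linarith [gridPt_add_sub_le (G := G) hn hA m w]
    have hM : (gridM A G (m + w) : ℝ) ≤ (w + 1) * gridM A G m := by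
      exact_mod_cast gridM_add_le hGA m w
    calc (gridM A G (m + w) : ℝ) * (gridPt A G n (m + w) - x)
        ≤ ((w + 1) * gridM A G m) * ((w + 1) / (n * gridM A G m)) := by
          gcongr
          exact (Nat.find_spec hex).trans (gridPt_mono (Nat.le_add_right m w)) |> sub_nonneg.2
      _ = (w + 1) ^ 2 / n := by field_simp

end Grid

section Blocks

variable {a : ℕ → ℕ}

def blockOf (a : ℕ → ℕ) (k : ℕ) : ℕ := Nat.findGreatest (fun s => a s ≤ k) k

lemma blockOf_eq (ha : StrictMono a) {s k : ℕ} (h₁ : a s ≤ k) (h₂ : k < a (s + 1)) :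
    blockOf a k = s := by
  have hsk : s ≤ k := (ha.id_le s).trans h₁
  refine le_antisymm (not_lt.1 fun h => ?_) (Nat.le_findGreatest hsk h₁)
  have := (ha.monotone (show s + 1 ≤ blockOf a k from h)).trans
    (Nat.findGreatest_spec (P := fun s => a s ≤ k) hsk h₁)
  omega

lemma apply_blockOf_le (ha₀ : a 0 = 0) (k : ℕ) : a (blockOf a k) ≤ k :=
  Nat.findGreatest_spec (P := fun s => a s ≤ k) (Nat.zero_le k) (by simp [ha₀])

lemma lt_apply_blockOf_succ (ha : StrictMono a) (k : ℕ) : k < a (blockOf a k + 1) := by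
  by_contra! h
  exact (blockOf a k).lt_irrefl (Nat.le_findGreatest ((ha.id_le _).trans h) h)

lemma tendsto_blockOf (ha : StrictMono a) : Tendsto (blockOf a) atTop atTop :=
  tendsto_atTop_atTop.2 fun s =>
    ⟨a s, fun _ hk => Nat.le_findGreatest ((ha.id_le s).trans hk) hk⟩

end Blocks

lemma pow_mul_exp_neg_eq {lam a : ℝ} (hlam : 0 < lam) (ha : 0 < a) (M : ℕ) (p : ℝ) :
    lam ^ M * exp (-(M * p - log a)) = a * exp (-(M * (p - log lam))) := by
  rw [← exp_log hlam, ← exp_nat_mul, ← exp_add, log_exp]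
  conv_rhs => rw [← exp_log ha, ← exp_add]
  ring_nf

section Construction

variable (α : ℕ → ℝ)

def target (s : ℕ) : ℕ := (Nat.unpair s).1 + 1

lemma exists_le_gridPt (s A : ℕ) :
    ∃ N, ((s + 1 : ℕ) : ℝ) ≤ gridPt A ((s + 1) ^ 2) (s + 1) N :=
  ((tendsto_gridPt (by positivity) s.succ_pos).eventually_ge_atTop _).exists

-- room for a window of `2 ^ target s` indices past the first point `≥ s + 1`
def stageLength (s A : ℕ) : ℕ := Nat.find (exists_le_gridPt s A) + 2 ^ target s

def stageDecay (s A m : ℕ) : ℝ :=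
  gridM A ((s + 1) ^ 2) m * gridPt A ((s + 1) ^ 2) (s + 1) m - log (α (target s))

-- `(s + 2) ^ 2` is the step of stage `s + 1`, which the window estimate needs below its first
-- exponent; the other two terms make `seqM` and `decay` jump by `s + 1` into the next stage
def nextStart (s A : ℕ) : ℕ :=
  max (max ((s + 2) ^ 2) (gridM A ((s + 1) ^ 2) (stageLength s A - 1) + (s + 1)))
    ⌈((s : ℝ) + 2) *
      (stageDecay α s A (stageLength s A - 1) + (s + 1) + log (α (target (s + 1))))⌉₊

def startExp : ℕ → ℕ
  | 0 => 1
  | s + 1 => nextStart α s (startExp s)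

def startIndex (s : ℕ) : ℕ := ∑ i ∈ range s, stageLength i (startExp α i)

def stage (k : ℕ) : ℕ := blockOf (startIndex α) k

def seqM (k : ℕ) : ℕ :=
  gridM (startExp α (stage α k)) ((stage α k + 1) ^ 2) (k - startIndex α (stage α k))

def decay (k : ℕ) : ℝ :=
  stageDecay α (stage α k) (startExp α (stage α k)) (k - startIndex α (stage α k))

lemma sq_le_startExp : ∀ s, (s + 1) ^ 2 ≤ startExp α s
  | 0 => le_rfl
  | _ + 1 => (le_max_left _ _).trans (le_max_left _ _)

lemma startIndex_succ (s : ℕ) :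
    startIndex α (s + 1) = startIndex α s + stageLength s (startExp α s) :=
  sum_range_succ _ _

lemma startIndex_strictMono : StrictMono (startIndex α) :=
  strictMono_nat_of_lt_succ fun s => by
    rw [startIndex_succ, stageLength]; have := Nat.one_le_two_pow (n := target s); omega

lemma stage_spec (k : ℕ) :
    startIndex α (stage α k) ≤ k ∧ k < startIndex α (stage α k + 1) :=
  ⟨apply_blockOf_le (sum_range_zero _) k, lt_apply_blockOf_succ (startIndex_strictMono α) k⟩

lemma tendsto_stage : Tendsto (stage α) atTop atTop :=
  tendsto_blockOf (startIndex_strictMono α)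

lemma seqM_pos (k : ℕ) : 0 < seqM α k :=
  (Nat.pos_of_ne_zero (by positivity)).trans_le
    ((sq_le_startExp α _).trans (Nat.le_add_right _ _))

lemma stage_step_within (s A m : ℕ) :
    gridM A ((s + 1) ^ 2) m + (s + 1) ≤ gridM A ((s + 1) ^ 2) (m + 1) ∧
      stageDecay α s A m + (s + 1) ≤ stageDecay α s A (m + 1) := by
  refine ⟨by rw [gridM_succ]; nlinarith, ?_⟩
  have hG : (0 : ℕ) < (s + 1) ^ 2 := by positivity
  have hpt := inv_le_gridPt (A := A) (G := (s + 1) ^ 2) (n := s + 1) m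
  simp only [stageDecay, gridM_mul_gridPt_succ hG]
  push_cast at hpt ⊢
  have hGpt : (s : ℝ) + 1 ≤ ((s : ℝ) + 1) ^ 2 * gridPt A ((s + 1) ^ 2) (s + 1) m :=
    calc (s : ℝ) + 1 = ((s : ℝ) + 1) ^ 2 * ((s : ℝ) + 1)⁻¹ := by field_simp
      _ ≤ _ := by gcongr
  have : (0 : ℝ) ≤ 1 / ((s : ℝ) + 1) := by positivity
  linarith

lemma stage_step_boundary (s A : ℕ) :
    gridM A ((s + 1) ^ 2) (stageLength s A - 1) + (s + 1) ≤ nextStart α s A ∧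
      stageDecay α s A (stageLength s A - 1) + (s + 1) ≤
        stageDecay α (s + 1) (nextStart α s A) 0 := by
  refine ⟨(le_max_right _ _).trans (le_max_left _ _), ?_⟩
  have hceil : _ ≤ (nextStart α s A : ℝ) :=
    (Nat.le_ceil _).trans (Nat.cast_le.2 (le_max_right _ _))
  simp only [stageDecay, gridPt_zero, gridM_zero] at hceil ⊢
  push_cast
  rw [← div_eq_mul_inv, le_sub_iff_add_le, le_div_iff₀ (by positivity)]
  linarith

lemma seqM_add_le_and_decay_add_le (k : ℕ) :
    seqM α k + (stage α k + 1) ≤ seqM α (k + 1) ∧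
      decay α k + (stage α k + 1) ≤ decay α (k + 1) := by
  obtain ⟨h₁, h₂⟩ := stage_spec α k
  set s := stage α k with hs
  rw [startIndex_succ] at h₂
  rcases (Nat.succ_le_of_lt h₂).lt_or_eq with hlt | heq
  · have hs' : stage α (k + 1) = s :=
      blockOf_eq (startIndex_strictMono α) (by omega) (by rw [startIndex_succ]; omega)
    have hoff : k + 1 - startIndex α s = k - startIndex α s + 1 := by omega
    simp only [seqM, decay, hs', ← hs, hoff]
    exact_mod_cast stage_step_within α s _ _
  · have hk : k + 1 = startIndex α (s + 1) := by rw [startIndex_succ]; omega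
    have hs' : stage α (k + 1) = s + 1 :=
      blockOf_eq (startIndex_strictMono α) hk.ge
        (hk ▸ startIndex_strictMono α (s + 1).lt_succ_self)
    have hoff : k - startIndex α s = stageLength s (startExp α s) - 1 := by omega
    have hoff' : k + 1 - startIndex α (s + 1) = 0 := by rw [startIndex_succ]; omega
    simp only [seqM, decay, hs', ← hs, hoff, hoff', gridM_zero, startExp]
    exact_mod_cast stage_step_boundary α s _

lemma tendsto_seqM_sub :
    Tendsto (fun k => (seqM α (k + 1) : ℝ) - seqM α k) atTop atTop := by
  refine tendsto_atTop_mono (fun k => ?_) (tendsto_atTop_add_const_right _ 1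
    (tendsto_natCast_atTop_atTop.comp (tendsto_stage α)))
  have := (seqM_add_le_and_decay_add_le α k).1
  rw [Function.comp_apply, le_sub_iff_add_le']
  exact_mod_cast this

lemma tendsto_decay_sub : Tendsto (fun k => decay α (k + 1) - decay α k) atTop atTop := by
  refine tendsto_atTop_mono (fun k => ?_) (tendsto_atTop_add_const_right _ 1
    (tendsto_natCast_atTop_atTop.comp (tendsto_stage α)))
  have := (seqM_add_le_and_decay_add_le α k).2
  simp only [Function.comp_apply]
  linarith

lemma exists_near_target (p : ℕ) (hα : 0 < α (p + 1)) {ε : ℝ} (hε : 0 < ε) {lam : ℝ}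
    (hlam : 1 < lam) (K : ℕ) :
    ∃ k, K < k ∧ padicValNat 2 k = p ∧
      |lam ^ seqM α k * exp (-decay α k) - α (p + 1)| < ε := by
  have hx : 0 < log lam := log_pos hlam
  have hn : Tendsto (fun s : ℕ => ((s + 1 : ℕ) : ℝ)) atTop atTop :=
    tendsto_natCast_atTop_atTop.comp (tendsto_add_atTop_nat 1)
  obtain ⟨N, hN⟩ := eventually_atTop.1 <| (eventually_gt_atTop K).and <|
    (hn.eventually_ge_atTop (log lam)).and <| (hn.eventually_ge_atTop (log lam)⁻¹).and <|
      hn.eventually_gt_atTop (α (p + 1) * 4 ^ (p + 1) / ε)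
  set s := Nat.pair p N
  obtain ⟨hKs, hxn, hnx, hεn⟩ := hN s (Nat.right_le_pair p N)
  have htarget : target s = p + 1 := by simp [s, target, Nat.unpair_pair]
  set A := startExp α s
  obtain ⟨m, hmN, hwin⟩ := exists_gridPt_window (G := (s + 1) ^ 2) s.succ_pos
    ((Nat.pos_of_ne_zero (by positivity)).trans_le (sq_le_startExp α s)) (sq_le_startExp α s)
    (inv_le_of_inv_le₀ hx hnx) (hxn.trans (Nat.find_spec (exists_le_gridPt s A)))
  obtain ⟨t, ht₁, ht₂, ht⟩ := exists_padicValNat_two_eq p (startIndex α s + m)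
  have hst : stage α t = s := blockOf_eq (startIndex_strictMono α) (by omega)
    (by rw [startIndex_succ, stageLength, htarget]; omega)
  obtain ⟨w, rfl⟩ : ∃ w, t = startIndex α s + m + w :=
    ⟨t - (startIndex α s + m), by omega⟩
  refine ⟨_, ?_, ht, ?_⟩
  · have := (startIndex_strictMono α).id_le s; simp only [id] at this; omega
  have hoff : startIndex α s + m + w - startIndex α s = m + w := by omega
  rw [seqM, decay, stageDecay, hst, hoff, htarget, pow_mul_exp_neg_eq (by linarith) hα]
  obtain ⟨hθ₀, hθ⟩ := hwin w
  set θ := (gridM A ((s + 1) ^ 2) (m + w) : ℝ) *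
    (gridPt A ((s + 1) ^ 2) (s + 1) (m + w) - log lam)
  have hw : ((w : ℝ) + 1) ^ 2 ≤ 4 ^ (p + 1) := by
    rw [show (4 : ℝ) ^ (p + 1) = (2 ^ (p + 1)) ^ 2 by
      rw [← pow_mul, mul_comm, pow_mul]; norm_num]
    gcongr
    exact_mod_cast (by omega : w + 1 ≤ 2 ^ (p + 1))
  calc |α (p + 1) * exp (-θ) - α (p + 1)| ≤ α (p + 1) * θ := by
        rw [abs_sub_comm, abs_of_nonneg (by nlinarith [exp_le_one_iff.2 (neg_nonpos.2 hθ₀)])]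
        nlinarith [one_sub_le_exp_neg θ]
    _ ≤ α (p + 1) * (4 ^ (p + 1) / (s + 1 : ℕ)) := by
        gcongr
        exact hθ.trans (by gcongr)
    _ < ε := by rw [← mul_div_assoc, div_lt_comm₀ (by positivity) hε]; exact hεn

end Construction

end AbakumovGordon

end

/-- multiplicative Abakumov–Gordon construction.
There exist `k₀ ≥ 1` and a choice function `j` such that for every sequence `(α_l)_{l ≥ 1}`
of positive reals there are a sequence `(M_k)_{k ≥ k₀}` of positive integers and a sequence
`(r_k)_{k ≥ k₀}` of positive reals with:
(i) `(M_k)` increasing and `M_{k+1} - M_k → ∞`;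
(ii) `(r_k)` decreasing and `r_{k+1}/r_k → 0`;
(iii) for every `l ≥ 1`, `ε > 0`, `λ > 1` and `K`, there is `k > K` with `j k = l` and
`|λ ^ (M k) * r k - α l| < ε`. -/
theorem abakumov_gordon_multiplicative :
    ∃ (k₀ : ℕ), 1 ≤ k₀ ∧ ∃ j : ℕ → ℕ,
      ∀ α : ℕ → ℝ, (∀ l, 1 ≤ l → 0 < α l) →
        ∃ (M : ℕ → ℕ) (r : ℕ → ℝ),
          (∀ k, k₀ ≤ k → 0 < M k) ∧
          (∀ k, k₀ ≤ k → M k < M (k + 1)) ∧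
          Tendsto (fun k : ℕ => (M (k + 1) : ℝ) - (M k : ℝ)) atTop atTop ∧
          (∀ k, k₀ ≤ k → 0 < r k) ∧
          (∀ k, k₀ ≤ k → r (k + 1) < r k) ∧
          Tendsto (fun k : ℕ => r (k + 1) / r k) atTop (nhds 0) ∧
          (∀ (l : ℕ), 1 ≤ l → ∀ ε : ℝ, 0 < ε → ∀ lam : ℝ, 1 < lam → ∀ K : ℕ,
            ∃ k, K < k ∧ j k = l ∧ |lam ^ (M k) * r k - α l| < ε) := by
  open AbakumovGordon in
  refine ⟨1, le_rfl, fun k => padicValNat 2 k + 1, fun α hα => ⟨seqM α, fun k => exp (-decay α k),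
    fun k _ => seqM_pos α k, fun k _ => ?_, tendsto_seqM_sub α, fun k _ => exp_pos _,
    fun k _ => ?_, ?_, fun l hl ε hε lam hlam K => ?_⟩⟩
  · have := (seqM_add_le_and_decay_add_le α k).1; omega
  · have := (seqM_add_le_and_decay_add_le α k).2
    exact exp_lt_exp.2 (by linarith [(stage α k).cast_nonneg (α := ℝ)])
  · simp only [← exp_sub]
    exact tendsto_exp_atBot.comp <| (tendsto_neg_atTop_atBot.comp (tendsto_decay_sub α)).congr
      fun k => by simp only [Function.comp_apply]; ring
  · obtain ⟨p, rfl⟩ : ∃ p, l = p + 1 := ⟨l - 1, by omega⟩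
    obtain ⟨k, hK, hk, hnear⟩ := exists_near_target α p (hα _ hl) hε hlam K
    exact ⟨k, hK, congrArg (· + 1) hk, hnear⟩
end

section
/- There exist an integer k₀ ≥ 1, a function j : {n ∈ ℕ : n ≥ k₀} → ℕ, a sequence (M_k)_{k≥k₀} of positive integers and a sequence (X_k)_{k≥k₀} of real numbers such that: (1) (M_k) is increasing and M_{k+1} − M_k → +∞; (2) (X_k) is increasing and X_{k+1} − X_k → +∞; (3) for every l ∈ ℕ, every ε > 0, every a > 0 and every K > 0, there exists k > K such that j(k) = l and |M_k a − X_k| < ε. -/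
open Filter Topology

namespace AGadd

/-- State: (round number n, integer M, ratio r). -/
noncomputable def st : ℕ → ℕ × ℕ × ℝ
  | 0 => (1, 1, 1)
  | (k+1) =>
      if (st k).2.2 < ((st k).1 : ℝ) then
        ((st k).1, (st k).2.1 + (st k).1 ^ 2,
          (st k).2.2 + 1 / (2 * (st k).1 * (st k).2.1))
      else
        ((st k).1 + 1,
          ((st k).1 + 1) * (⌈(st k).2.2 * ((st k).2.1 : ℝ)⌉₊ + (st k).2.1 + (st k).1 + 1),
          1 / (((st k).1 : ℝ) + 1))

noncomputable def nn (k : ℕ) : ℕ := (st k).1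
noncomputable def MM (k : ℕ) : ℕ := (st k).2.1
noncomputable def rr (k : ℕ) : ℝ := (st k).2.2
noncomputable def XX (k : ℕ) : ℝ := (MM k : ℝ) * rr k
noncomputable def jj (k : ℕ) : ℕ := (nn k).unpair.1

lemma nn0 : nn 0 = 1 := rfl
lemma MM0 : MM 0 = 1 := rfl
lemma rr0 : rr 0 = 1 := rfl

lemma step_lt {k : ℕ} (h : rr k < (nn k : ℝ)) :
    nn (k+1) = nn k ∧ MM (k+1) = MM k + (nn k) ^ 2 ∧
      rr (k+1) = rr k + 1 / (2 * (nn k) * (MM k)) := by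
  simp only [nn, MM, rr] at *
  rw [st, if_pos h]
  exact ⟨rfl, rfl, rfl⟩

lemma step_ge {k : ℕ} (h : ¬ rr k < (nn k : ℝ)) :
    nn (k+1) = nn k + 1 ∧
      MM (k+1) = (nn k + 1) * (⌈rr k * (MM k : ℝ)⌉₊ + MM k + nn k + 1) ∧
      rr (k+1) = 1 / ((nn k : ℝ) + 1) := by
  simp only [nn, MM, rr] at *
  rw [st, if_neg h]
  exact ⟨rfl, rfl, rfl⟩

lemma one_le_nn (k : ℕ) : 1 ≤ nn k := by
  induction k with
  | zero => exact le_refl 1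
  | succ k ih =>
      by_cases h : rr k < (nn k : ℝ)
      · rw [(step_lt h).1]; exact ih
      · rw [(step_ge h).1]; omega

lemma one_le_MM (k : ℕ) : 1 ≤ MM k := by
  induction k with
  | zero => exact le_refl 1
  | succ k ih =>
      by_cases h : rr k < (nn k : ℝ)
      · rw [(step_lt h).2.1]; omega
      · rw [(step_ge h).2.1]
        have := one_le_nn k
        nlinarith [Nat.zero_le (⌈rr k * (MM k : ℝ)⌉₊)]

lemma inv_rr (k : ℕ) : 1 / (nn k : ℝ) ≤ rr k := by
  induction k with
  | zero => norm_num [nn0, rr0]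
  | succ k ih =>
      have hn : (0:ℝ) < nn k := by exact_mod_cast one_le_nn k
      have hM : (0:ℝ) < MM k := by exact_mod_cast one_le_MM k
      by_cases h : rr k < (nn k : ℝ)
      · obtain ⟨h1, _, h3⟩ := step_lt h
        rw [h1, h3]
        have : (0:ℝ) < 1 / (2 * (nn k) * (MM k)) := by positivity
        linarith
      · obtain ⟨h1, _, h3⟩ := step_ge h
        rw [h1, h3]
        push_cast
        exact le_rfl

lemma rr_pos (k : ℕ) : 0 < rr k := by
  have hn : (0:ℝ) < nn k := by exact_mod_cast one_le_nn k
  have h : (0:ℝ) < 1 / nn k := by positivity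
  linarith [inv_rr k]

lemma nn_le_succ (k : ℕ) : nn k ≤ nn (k+1) := by
  by_cases h : rr k < (nn k : ℝ)
  · rw [(step_lt h).1]
  · rw [(step_ge h).1]; omega

lemma nn_succ_le (k : ℕ) : nn (k+1) ≤ nn k + 1 := by
  by_cases h : rr k < (nn k : ℝ)
  · rw [(step_lt h).1]; omega
  · rw [(step_ge h).1]

lemma nn_le (k : ℕ) : nn k ≤ k + 1 := by
  induction k with
  | zero => simp [nn0]
  | succ k ih => have := nn_succ_le k; omega

lemma MM_gap (k : ℕ) : MM k + nn k ≤ MM (k+1) := by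
  by_cases h : rr k < (nn k : ℝ)
  · rw [(step_lt h).2.1]
    have := one_le_nn k
    nlinarith
  · rw [(step_ge h).2.1]
    have := one_le_nn k
    nlinarith [Nat.zero_le (⌈rr k * (MM k : ℝ)⌉₊), one_le_MM k]

lemma XX_gap (k : ℕ) : (nn k : ℝ) ≤ XX (k+1) - XX k := by
  have hn : (0:ℝ) < nn k := by exact_mod_cast one_le_nn k
  have hM : (0:ℝ) < MM k := by exact_mod_cast one_le_MM k
  by_cases h : rr k < (nn k : ℝ)
  · obtain ⟨h1, h2, h3⟩ := step_lt h
    have hr := inv_rr k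
    have hδ : (0:ℝ) < 1 / (2 * (nn k) * (MM k)) := by positivity
    have hM' : (MM (k+1) : ℝ) = MM k + (nn k)^2 := by rw [h2]; push_cast; ring
    simp only [XX]
    rw [hM', h3]
    have h1' : (nn k : ℝ)^2 * rr k ≥ (nn k : ℝ) := by
      have : (nn k:ℝ)^2 * (1/(nn k:ℝ)) = nn k := by field_simp
      nlinarith
    nlinarith [mul_pos (by positivity : (0:ℝ) < (MM k : ℝ) + (nn k:ℝ)^2) hδ]
  · obtain ⟨h1, h2, h3⟩ := step_ge h
    simp only [XX]
    rw [h2, h3]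
    have hne : ((nn k : ℝ) + 1) ≠ 0 := by positivity
    have hcast : ((((nn k + 1) * (⌈rr k * (MM k : ℝ)⌉₊ + MM k + nn k + 1)) : ℕ) : ℝ)
        = ((nn k : ℝ) + 1) * ((⌈rr k * (MM k : ℝ)⌉₊ : ℝ) + MM k + nn k + 1) := by
      push_cast; ring
    rw [hcast, mul_one_div, mul_div_cancel_left₀ _ hne]
    have := Nat.le_ceil (rr k * (MM k : ℝ))
    nlinarith

lemma no_stall (k : ℕ) : ∃ i, nn (k + i) ≠ nn k := by
  by_contra hc
  push_neg at hc
  -- all steps are in-round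
  have hlt : ∀ i, rr (k + i) < ((nn (k + i)) : ℝ) := by
    intro i
    by_contra h
    have h1 := (step_ge h).1
    have h2 : nn (k + i + 1) = nn k := hc (i + 1)
    have h3 : nn (k + i) = nn k := hc i
    omega
  have hstep : ∀ i, MM (k + i) = MM k + i * (nn k)^2 ∧
      rr (k + i + 1) = rr (k + i) + 1 / (2 * (nn k) * (MM (k + i))) := by
    intro i
    induction i with
    | zero =>
        refine ⟨by simp, ?_⟩
        have hl := step_lt (hlt 0)
        have h0 : nn (k + 0) = nn k := hc 0
        rw [h0] at hl
        exact hl.2.2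
    | succ i ih =>
        have hl := step_lt (hlt i)
        have hl2 := step_lt (hlt (i+1))
        have hnn : nn (k + (i+1)) = nn k := hc (i+1)
        rw [hnn] at hl2
        constructor
        · show MM (k + i + 1) = MM k + (i+1) * (nn k)^2
          rw [hl.2.1, ih.1, hc i]
          ring
        · exact hl2.2.2
  set c : ℕ := nn k with hcdef
  set M0 : ℕ := MM k with hM0
  have hcpos : (0:ℝ) < c := by exact_mod_cast one_le_nn k
  have hMpos : (0:ℝ) < M0 := by exact_mod_cast one_le_MM k
  set B : ℝ := 1 / (2 * c * ((M0:ℝ) + (c:ℝ)^2)) with hB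
  have hBpos : 0 < B := by positivity
  have hsum : ∀ i, rr k + B * (∑ j ∈ Finset.range i, (1 / ((j:ℝ) + 1))) ≤ rr (k + i) := by
    intro i
    induction i with
    | zero => simp
    | succ i ih =>
        have h2 := (hstep i).2
        have hMi : (MM (k+i) : ℝ) = (M0:ℝ) + (i:ℝ) * (c:ℝ)^2 := by
          rw [(hstep i).1]; push_cast; ring
        have key : B * (1 / ((i:ℝ) + 1)) ≤ 1 / (2 * (c:ℝ) * (MM (k + i))) := by
          rw [hB, hMi]
          rw [div_mul_div_comm, one_mul]
          apply div_le_div_of_nonneg_left (by norm_num) (by positivity)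
          have hi : (0:ℝ) ≤ (i:ℝ) := Nat.cast_nonneg i
          nlinarith [mul_nonneg (mul_nonneg hcpos.le hMpos.le) hi, pow_pos hcpos 3]
        have hgoal : rr k + B * (∑ j ∈ Finset.range i, (1 / ((j:ℝ) + 1)))
            + B * (1 / ((i:ℝ)+1)) ≤ rr (k + i + 1) := by
          rw [h2]; linarith
        show rr k + B * (∑ j ∈ Finset.range (i+1), (1 / ((j:ℝ) + 1))) ≤ rr (k + i + 1)
        rw [Finset.sum_range_succ, mul_add]
        linarith
  obtain ⟨i, hi⟩ := (Filter.tendsto_atTop.mp Real.tendsto_sum_range_one_div_nat_succ_atTop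
      ((c:ℝ) / B)).exists
  have hge : rr k + (c:ℝ) ≤ rr (k + i) := by
    have h1 := hsum i
    have h2 : (c:ℝ) ≤ B * (∑ j ∈ Finset.range i, (1 / ((j:ℝ) + 1))) := by
      have h3 := (div_le_iff₀ hBpos).mp hi
      rw [mul_comm] at h3
      exact h3
    linarith
  have hlt' : rr (k + i) < (c:ℝ) := by
    have h := hlt i
    rwa [hc i] at h
  linarith [rr_pos k]

lemma next_round (k : ℕ) : ∃ e, k ≤ e ∧ (∀ i, k ≤ i → i ≤ e → nn i = nn k) ∧
    ¬ rr e < (nn e : ℝ) ∧ nn (e+1) = nn k + 1 ∧ rr (e+1) = 1 / ((nn k : ℝ) + 1) := by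
  classical
  have hex := no_stall k
  have hne : nn (k + Nat.find hex) ≠ nn k := Nat.find_spec hex
  have hpos : Nat.find hex ≠ 0 := by
    intro h; apply hne; rw [h, Nat.add_zero]
  set i1 := Nat.find hex - 1 with hi1def
  have hmin : ∀ j, j ≤ i1 → nn (k + j) = nn k := by
    intro j hj
    by_contra h
    have : Nat.find hex ≤ j := Nat.find_le h
    omega
  have he : nn (k + i1) = nn k := hmin i1 le_rfl
  have hsucc : k + i1 + 1 = k + Nat.find hex := by omega
  have hg : ¬ rr (k + i1) < ((nn (k + i1)) : ℝ) := by
    intro h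
    apply hne
    rw [← hsucc, (step_lt h).1, he]
  obtain ⟨hg1, hg2, hg3⟩ := step_ge hg
  refine ⟨k + i1, Nat.le_add_right _ _, ?_, hg, ?_, ?_⟩
  · intro i hki hie
    obtain ⟨j, rfl⟩ := Nat.exists_eq_add_of_le hki
    exact hmin j (by omega)
  · rw [hg1, he]
  · rw [hg3, he]

lemma reach (c : ℕ) (hc : 1 ≤ c) : ∃ s, nn s = c ∧ (2 ≤ c → rr s = 1 / (c:ℝ)) := by
  induction c with
  | zero => omega
  | succ c ih =>
      rcases Nat.eq_or_lt_of_le hc with h | h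
      · exact ⟨0, by rw [nn0]; omega, fun h2 => absurd h2 (by omega)⟩
      · obtain ⟨s, hs, _⟩ := ih (by omega)
        obtain ⟨e, _, _, _, h4, h5⟩ := next_round s
        refine ⟨e + 1, by rw [h4, hs], fun _ => ?_⟩
        rw [h5, hs]
        push_cast
        ring

lemma nn_tendsto : Tendsto (fun k => (nn k : ℝ)) atTop atTop := by
  have hmono : Monotone nn := monotone_nat_of_le_succ nn_le_succ
  have hub : ∀ b : ℕ, ∃ a, b ≤ nn a := by
    intro b
    obtain ⟨s, hs, _⟩ := reach (max b 1) (le_max_right _ _)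
    exact ⟨s, by rw [hs]; exact le_max_left _ _⟩
  exact tendsto_natCast_atTop_atTop.comp (tendsto_atTop_atTop_of_monotone hmono hub)

lemma coverage (l : ℕ) (ε : ℝ) (hε : 0 < ε) (a : ℝ) (ha : 0 < a) (K : ℕ) :
    ∃ k, K < k ∧ jj k = l ∧ |(MM k : ℝ) * a - XX k| < ε := by
  classical
  set m : ℕ := K + 2 + ⌈a⌉₊ + ⌈1/a⌉₊ + ⌈1/ε⌉₊ with hm
  set c : ℕ := Nat.pair l m with hcdef
  have hmc : m ≤ c := Nat.right_le_pair l m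
  have hc2 : 2 ≤ c := by omega
  have hcR : (0:ℝ) < c := by
    have : (0:ℕ) < c := by omega
    exact_mod_cast this
  have hac : a ≤ (c:ℝ) := by
    calc a ≤ (⌈a⌉₊ : ℝ) := Nat.le_ceil a
      _ ≤ (c:ℝ) := by exact_mod_cast (by omega : ⌈a⌉₊ ≤ c)
  have hca : 1 / (c:ℝ) ≤ a := by
    rw [div_le_iff₀ hcR]
    have h1 : 1/a ≤ (⌈1/a⌉₊:ℝ) := Nat.le_ceil _
    have h2 : (⌈1/a⌉₊:ℝ) ≤ (c:ℝ) := by exact_mod_cast (by omega : ⌈1/a⌉₊ ≤ c)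
    rw [div_le_iff₀ ha] at h1
    nlinarith
  have hεc : 1 / (2 * (c:ℝ)) < ε := by
    rw [div_lt_iff₀ (by positivity)]
    have h1 : 1/ε ≤ (⌈1/ε⌉₊:ℝ) := Nat.le_ceil _
    have h2 : (⌈1/ε⌉₊:ℝ) + 1 ≤ (c:ℝ) := by
      exact_mod_cast (by omega : ⌈1/ε⌉₊ + 1 ≤ c)
    rw [div_le_iff₀ hε] at h1
    nlinarith
  obtain ⟨s, hs, hrs'⟩ := reach c (by omega)
  have hrs : rr s = 1 / (c:ℝ) := hrs' hc2
  obtain ⟨e, hse, hconst, hre, _, _⟩ := next_round s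
  have hnne : nn e = c := by rw [hconst e hse le_rfl, hs]
  have hre' : (c:ℝ) ≤ rr e := by
    have := not_lt.mp hre
    rwa [hnne] at this
  -- in-round steps between s and e
  have hstep : ∀ i, s ≤ i → i < e →
      rr (i+1) = rr i + 1 / (2 * (c:ℝ) * (MM i)) ∧ nn i = c := by
    intro i h1 h2
    have hni : nn i = nn s := hconst i h1 (le_of_lt h2)
    have hni1 : nn (i+1) = nn s := hconst (i+1) (by omega) (by omega)
    by_cases h : rr i < (nn i : ℝ)
    · obtain ⟨_, _, h3⟩ := step_lt h
      rw [hni, hs] at h3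
      exact ⟨h3, by rw [hni, hs]⟩
    · exfalso
      have := (step_ge h).1
      omega
  have hKs : K < s := by
    have h1 := nn_le s
    omega
  rcases lt_or_eq_of_le (le_trans hac hre') with hlt | heq
  · -- a crossing strictly inside the round
    have hexQ : ∃ i, a < rr (s + i) := by
      refine ⟨e - s, ?_⟩
      rwa [Nat.add_sub_cancel' hse]
    have hspec : a < rr (s + Nat.find hexQ) := Nat.find_spec hexQ
    have hpos : Nat.find hexQ ≠ 0 := by
      intro h
      rw [h, Nat.add_zero, hrs] at hspec
      linarith
    have hfle : Nat.find hexQ ≤ e - s := Nat.find_le (by rwa [Nat.add_sub_cancel' hse])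
    set t := s + (Nat.find hexQ - 1) with htdef
    have hi1 : ¬ a < rr t := Nat.find_min hexQ (by omega)
    push_neg at hi1
    have ht1 : t + 1 = s + Nat.find hexQ := by omega
    have hte : t < e := by omega
    obtain ⟨hrt, hnt⟩ := hstep t (by omega) hte
    have hMt : (0:ℝ) < MM t := by exact_mod_cast one_le_MM t
    have hat : a - rr t < 1 / (2 * (c:ℝ) * (MM t)) := by
      have h5 : a < rr (t+1) := by rw [ht1]; exact hspec
      rw [hrt] at h5
      linarith
    refine ⟨t, by omega, ?_, ?_⟩
    · simp only [jj]
      rw [hnt, hcdef, Nat.unpair_pair]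
    · simp only [XX]
      rw [abs_sub_lt_iff]
      have heq2 : (MM t : ℝ) * (1 / (2 * (c:ℝ) * (MM t))) = 1 / (2 * (c:ℝ)) := by
        field_simp
      have hub : (MM t : ℝ) * (a - rr t) < 1 / (2 * (c:ℝ)) := by
        calc (MM t : ℝ) * (a - rr t) < (MM t : ℝ) * (1 / (2 * (c:ℝ) * (MM t))) :=
              mul_lt_mul_of_pos_left hat hMt
          _ = 1 / (2 * (c:ℝ)) := heq2
      have hlb : 0 ≤ (MM t : ℝ) * (a - rr t) := by nlinarith
      constructor
      · nlinarith
      · nlinarith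
  · -- a = rr e exactly
    refine ⟨e, by omega, ?_, ?_⟩
    · simp only [jj]
      rw [hnne, hcdef, Nat.unpair_pair]
    · simp only [XX]
      rw [heq]
      simpa using hε

end AGadd

/-- additive Abakumov–Gordon construction.
There exist `k₀ ≥ 1`, a choice function `j`, a sequence `(M_k)_{k ≥ k₀}` of positive
integers and a sequence `(X_k)_{k ≥ k₀}` of real numbers such that:
(1) `(M_k)` is increasing and `M_{k+1} - M_k → ∞`;
(2) `(X_k)` is increasing and `X_{k+1} - X_k → ∞`;
(3) for every `l ∈ ℕ`, `ε > 0`, `a > 0` and `K`, there is `k > K` with `j k = l` and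
`|M_k • a - X_k| < ε`. -/
theorem abakumov_gordon_additive :
    ∃ (k₀ : ℕ), 1 ≤ k₀ ∧ ∃ (j : ℕ → ℕ) (M : ℕ → ℕ) (X : ℕ → ℝ),
      (∀ k, k₀ ≤ k → 0 < M k) ∧
      (∀ k, k₀ ≤ k → M k < M (k + 1)) ∧
      Tendsto (fun k : ℕ => (M (k + 1) : ℝ) - (M k : ℝ)) atTop atTop ∧
      (∀ k, k₀ ≤ k → X k < X (k + 1)) ∧
      Tendsto (fun k : ℕ => X (k + 1) - X k) atTop atTop ∧
      (∀ (l : ℕ) (ε : ℝ), 0 < ε → ∀ a : ℝ, 0 < a → ∀ K : ℕ,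
        ∃ k, K < k ∧ j k = l ∧ |(M k : ℝ) * a - X k| < ε) := by
  classical
  refine ⟨1, le_rfl, AGadd.jj, AGadd.MM, AGadd.XX, ?_, ?_, ?_, ?_, ?_, ?_⟩
  · exact fun k _ => AGadd.one_le_MM k
  · intro k _
    have h1 := AGadd.MM_gap k
    have h2 := AGadd.one_le_nn k
    omega
  · apply tendsto_atTop_mono _ AGadd.nn_tendsto
    intro k
    have h : ((AGadd.MM k + AGadd.nn k : ℕ) : ℝ) ≤ ((AGadd.MM (k+1) : ℕ) : ℝ) := by
      exact_mod_cast AGadd.MM_gap k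
    push_cast at h
    linarith
  · intro k _
    have h1 := AGadd.XX_gap k
    have hn : (1:ℝ) ≤ AGadd.nn k := by exact_mod_cast AGadd.one_le_nn k
    linarith
  · apply tendsto_atTop_mono _ AGadd.nn_tendsto
    intro k
    linarith [AGadd.XX_gap k]
  · exact AGadd.coverage
end

section
/- Let (v_k)_{k≥1} be a non-decreasing sequence of positive real numbers tending to +∞. Then there exists a non-decreasing sequence (u_k)_{k≥1} of positive real numbers tending to +∞ such that: (a) Σ_{k≥1} u_k/k³ < +∞; (b) u_k/v_k³ → 0 as k → +∞; (c) Σ_{m>k} u_m/((m−k) + v_m)³ → 0 as k → +∞. -/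
open Filter Topology

/-!
Take `u k = min k (v k)`. Everything rests on `c / b ^ 3 ≤ 1 / b ^ 2` for `c ≤ b`: it bounds
`u k / k ^ 3` by `1 / k ^ 2`, giving (a); it bounds `u k / (v k) ^ 3` by `1 / (v k) ^ 2`, giving (b);
and it bounds the `m`-th tail term by `1 / ((m + 1) + v (k + m + 1)) ^ 2`, which is dominated by
`1 / (m + 1) ^ 2` and tends to `0` as `k → ∞`, so (c) follows by dominated convergence (Tannery).
-/

lemma div_pow_three_le_inv_sq {b c : ℝ} (hb : 0 ≤ b) (hcb : c ≤ b) : c / b ^ 3 ≤ (b ^ 2)⁻¹ := by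
  rcases hb.eq_or_lt with rfl | hb
  · simp
  calc c / b ^ 3 ≤ b / b ^ 3 := div_le_div_of_nonneg_right hcb (by positivity)
    _ = (b ^ 2)⁻¹ := by field_simp

lemma tendsto_div_pow_three_of_le {α : Type*} {l : Filter α} {u w : α → ℝ}
    (hw : Tendsto w l atTop) (hu : ∀ᶠ x in l, 0 ≤ u x) (huw : ∀ᶠ x in l, u x ≤ w x) :
    Tendsto (fun x => u x / w x ^ 3) l (𝓝 0) := by
  refine tendsto_of_tendsto_of_tendsto_of_le_of_le' tendsto_const_nhds
    ((tendsto_pow_atTop two_ne_zero).comp hw).inv_tendsto_atTop ?_ ?_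
  · filter_upwards [hu, hw.eventually_ge_atTop 0] with x hux hwx
    positivity
  · filter_upwards [huw, hw.eventually_ge_atTop 0] with x hux hwx
    exact div_pow_three_le_inv_sq hwx hux

lemma Filter.Tendsto.min_atTop {α β : Type*} [LinearOrder β] {l : Filter α} {f g : α → β}
    (hf : Tendsto f l atTop) (hg : Tendsto g l atTop) :
    Tendsto (fun x => min (f x) (g x)) l atTop :=
  tendsto_atTop.2 fun b => by
    filter_upwards [hf.eventually_ge_atTop b, hg.eventually_ge_atTop b] with x hfx hgx
    exact le_min hfx hgx

lemma summable_inv_succ_sq : Summable (fun m : ℕ => (((m : ℝ) + 1) ^ 2)⁻¹) := by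
  simpa using (summable_nat_add_iff 1).mpr (Real.summable_nat_pow_inv.mpr one_lt_two)

lemma summable_div_natCast_pow_three_of_le {u : ℕ → ℝ} (hu : ∀ n, 1 ≤ n → 0 ≤ u n)
    (hun : ∀ n, u n ≤ n) : Summable (fun n : ℕ => u n / (n : ℝ) ^ 3) := by
  refine .of_nonneg_of_le (fun n => ?_) (fun n => div_pow_three_le_inv_sq n.cast_nonneg (hun n))
    (Real.summable_nat_pow_inv.mpr one_lt_two)
  rcases n.eq_zero_or_pos with rfl | hn
  · simp
  · exact div_nonneg (hu n hn) (by positivity)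

section Tail

variable {u v : ℕ → ℝ} (hu : ∀ n, 1 ≤ n → 0 ≤ u n) (huv : ∀ n, u n ≤ v n)
include hu huv

lemma tail_term_nonneg (k m : ℕ) : 0 ≤ u (k + m + 1) / (((m : ℝ) + 1) + v (k + m + 1)) ^ 3 := by
  have hu' := hu (k + m + 1) (by omega)
  have hv : 0 ≤ v (k + m + 1) := hu'.trans (huv _)
  positivity

lemma tail_term_le (k m : ℕ) :
    u (k + m + 1) / (((m : ℝ) + 1) + v (k + m + 1)) ^ 3 ≤ (((m : ℝ) + 1) ^ 2)⁻¹ := by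
  have hv : 0 ≤ v (k + m + 1) := (hu _ (by omega)).trans (huv _)
  calc _ ≤ ((((m : ℝ) + 1) + v (k + m + 1)) ^ 2)⁻¹ :=
        div_pow_three_le_inv_sq (by positivity) (by linarith [huv (k + m + 1)])
    _ ≤ _ := inv_anti₀ (by positivity) (pow_le_pow_left₀ (by positivity) (by linarith) 2)

lemma summable_tail (k : ℕ) :
    Summable (fun m : ℕ => u (k + m + 1) / (((m : ℝ) + 1) + v (k + m + 1)) ^ 3) :=
  .of_nonneg_of_le (tail_term_nonneg hu huv k) (tail_term_le hu huv k) summable_inv_succ_sq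

lemma tendsto_tsum_tail (hv : Tendsto v atTop atTop) :
    Tendsto (fun k : ℕ => ∑' m : ℕ, u (k + m + 1) / (((m : ℝ) + 1) + v (k + m + 1)) ^ 3)
      atTop (𝓝 0) := by
  rw [← tsum_zero]
  refine tendsto_tsum_of_dominated_convergence summable_inv_succ_sq (fun m => ?_)
    (.of_forall fun k m => ?_)
  · have hshift : Tendsto (fun k : ℕ => k + m + 1) atTop atTop :=
      tendsto_atTop_mono (fun k => by dsimp; omega) tendsto_id
    refine tendsto_div_pow_three_of_le
      (tendsto_atTop_add_const_left _ _ (hv.comp hshift)) (.of_forall fun k => hu _ (by omega))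
      (.of_forall fun k => ?_)
    linarith [huv (k + m + 1)]
  · rw [Real.norm_of_nonneg (tail_term_nonneg hu huv k m)]
    exact tail_term_le hu huv k m

end Tail

/-- auxiliary sequence lemma.
Let `(v_k)_{k ≥ 1}` be a nondecreasing sequence of positive reals tending to `+∞`.  Then
there exists a nondecreasing sequence `(u_k)_{k ≥ 1}` of positive reals tending to `+∞`
such that:
(a) `∑_{k ≥ 1} u_k / k³ < ∞`;
(b) `u_k / v_k³ → 0`;
(c) the tail sums `∑_{m > k} u_m / ((m − k) + v_m)³` tend to `0` as `k → ∞`. -/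
theorem exists_good_minorant_sequence
    (v : ℕ → ℝ) (hv_pos : ∀ k, 1 ≤ k → 0 < v k)
    (hv_mono : ∀ k, 1 ≤ k → v k ≤ v (k + 1))
    (hv_top : Tendsto v atTop atTop) :
    ∃ u : ℕ → ℝ,
      (∀ k, 1 ≤ k → 0 < u k) ∧
      (∀ k, 1 ≤ k → u k ≤ u (k + 1)) ∧
      Tendsto u atTop atTop ∧
      Summable (fun k : ℕ => u k / (k : ℝ) ^ 3) ∧
      Tendsto (fun k : ℕ => u k / (v k) ^ 3) atTop (nhds 0) ∧
      (∀ k : ℕ, Summable (fun m : ℕ => u (k + m + 1) / (((m : ℝ) + 1) + v (k + m + 1)) ^ 3)) ∧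
      Tendsto (fun k : ℕ => ∑' m : ℕ, u (k + m + 1) / (((m : ℝ) + 1) + v (k + m + 1)) ^ 3)
        atTop (nhds 0) := by
  set u : ℕ → ℝ := fun k => min (k : ℝ) (v k)
  have hu_pos (k : ℕ) (hk : 1 ≤ k) : 0 < u k := lt_min (by exact_mod_cast hk) (hv_pos k hk)
  have hu_nonneg (k : ℕ) (hk : 1 ≤ k) : 0 ≤ u k := (hu_pos k hk).le
  have huv (k : ℕ) : u k ≤ v k := min_le_right _ _
  refine ⟨u, hu_pos, fun k hk => min_le_min (by simp) (hv_mono k hk),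
    tendsto_natCast_atTop_atTop.min_atTop hv_top,
    summable_div_natCast_pow_three_of_le hu_nonneg (fun k => min_le_left _ _),
    tendsto_div_pow_three_of_le hv_top (eventually_ge_atTop 1 |>.mono hu_nonneg) (.of_forall huv),
    summable_tail hu_nonneg huv, tendsto_tsum_tail hu_nonneg huv hv_top⟩
end
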